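/- arXiv:1510.03393 — 5 statements merged into one kernel-verified Lean document; each statement's English description precedes it below -/
import Mathlib

section
/- Let σ be a nonzero finite Borel measure on ℝ and x ∈ ℝ. Then the function g_x : (0, ∞) → (0, ∞) defined by g_x(y) = ∫ (1 + t²)/((t - x)² + y²) dσ(t) is continuous, strictly decreasing, and tends to 0 as y → ∞. Consequently, there is at most one y > 0 with g_x(y) = 1, and such y exists if and only if ∫ (1 + t²)/(t - x)² dσ(t) > 1 (the integral possibly being +∞). -/
open MeasureTheory Filter

/-- The extended-real integral `∫ (1+t²)/(t-x)² dσ(t)`, equal to `+∞` when e.g.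
`σ({x}) > 0` (note that in `ℝ≥0∞` one has `a / 0 = ∞` for `a ≠ 0`). -/
noncomputable def singIntegral (σ : MeasureTheory.Measure ℝ) (x : ℝ) : ENNReal :=
  ∫⁻ t : ℝ, ENNReal.ofReal (1 + t ^ 2) / ENNReal.ofReal ((t - x) ^ 2) ∂σ

/-!
For `y > 0` the integrand `(1 + t²)/((t - x)² + y²)` is a bounded continuous function of `t`,
and strictly decreasing in `y`; dominated convergence gives continuity and the limit `0` at
infinity, and since `σ ≠ 0` the strict pointwise decrease survives integration. As `y ↓ 0` the
integrand increases to `(1 + t²)/(t - x)²` in `ℝ≥0∞`, so by monotone convergence `singIntegral σ x`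
is the supremum of the values `g y`. Thus `g` takes the value `1` on `(0, ∞)` exactly when this
supremum exceeds `1`, by the intermediate value theorem between some `g y > 1` and the limit `0`.
-/

open Set

theorem integral_lt_integral_of_forall_lt {α : Type*} [MeasurableSpace α] {μ : Measure α}
    (hμ : μ ≠ 0) {f g : α → ℝ} (hf : Integrable f μ) (hg : Integrable g μ)
    (hfg : ∀ a, f a < g a) : ∫ a, f a ∂μ < ∫ a, g a ∂μ := by
  have hsupport : Function.support (g - f) = univ :=
    eq_univ_of_forall fun a => sub_ne_zero.mpr (hfg a).ne'
  have hpos : 0 < ∫ a, (g - f) a ∂μ := by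
    refine (integral_pos_iff_support_of_nonneg (f := g - f) (fun a => sub_nonneg.mpr (hfg a).le)
      (hg.sub hf)).2 ?_
    rwa [hsupport, Measure.measure_univ_pos]
  rw [Pi.sub_def, integral_sub hg hf] at hpos
  linarith

namespace SingIntegral

noncomputable def integrand (x y t : ℝ) : ℝ := (1 + t ^ 2) / ((t - x) ^ 2 + y ^ 2)

variable {x y y₀ : ℝ}

lemma integrand_pos (hy : y ≠ 0) (t : ℝ) : 0 < integrand x y t := by
  unfold integrand; positivity

lemma integrand_le (hy : 0 < y) (t : ℝ) :
    integrand x y t ≤ 2 * (1 + x ^ 2) * (1 + (y ^ 2)⁻¹) := by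
  have hy2 : 0 < y ^ 2 := by positivity
  have hpeetre : 1 + t ^ 2 ≤ 2 * (1 + x ^ 2) * (1 + (t - x) ^ 2) := by
    nlinarith [sq_nonneg (x * (t - x)), sq_nonneg (t - 2 * x)]
  have hshift : 1 + (t - x) ^ 2 ≤ (1 + (y ^ 2)⁻¹) * ((t - x) ^ 2 + y ^ 2) := by
    rw [add_mul, one_mul, inv_mul_eq_div, add_div, div_self hy2.ne']
    linarith [div_nonneg (sq_nonneg (t - x)) hy2.le, sq_nonneg y]
  rw [integrand, div_le_iff₀ (by positivity), mul_assoc]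
  exact hpeetre.trans (mul_le_mul_of_nonneg_left hshift (by positivity))

lemma integrand_strictAntiOn (t : ℝ) : StrictAntiOn (fun y => integrand x y t) (Ioi 0) := by
  intro y₁ hy₁ y₂ _ hlt
  have hy₁ : 0 < y₁ := hy₁
  refine div_lt_div_of_pos_left (by positivity) (by positivity) ?_
  have := pow_lt_pow_left₀ hlt hy₁.le two_ne_zero
  linarith

lemma continuous_integrand (hy : y ≠ 0) : Continuous (integrand x y) := by
  unfold integrand
  exact Continuous.div (by fun_prop) (by fun_prop) fun t => by positivity

variable (σ : Measure ℝ) [IsFiniteMeasure σ]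

lemma integrable_integrand (hy : 0 < y) : Integrable (integrand x y) σ :=
  Integrable.mono' (integrable_const (2 * (1 + x ^ 2) * (1 + (y ^ 2)⁻¹)))
    (continuous_integrand hy.ne').aestronglyMeasurable <| ae_of_all _ fun t => by
      rw [Real.norm_of_nonneg (integrand_pos hy.ne' t).le]
      exact integrand_le hy t

lemma norm_integrand_le (hy₀ : 0 < y₀) (hy : y₀ ≤ y) (t : ℝ) :
    ‖integrand x y t‖ ≤ integrand x y₀ t := by
  rw [Real.norm_of_nonneg (integrand_pos (hy₀.trans_le hy).ne' t).le]
  exact (integrand_strictAntiOn t).antitoneOn hy₀ (mem_Ioi.mpr (hy₀.trans_le hy)) hy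

lemma continuousAt_integral_integrand (hy : 0 < y) :
    ContinuousAt (fun y => ∫ t, integrand x y t ∂σ) y := by
  have hhalf : 0 < y / 2 := half_pos hy
  refine continuousAt_of_dominated (bound := integrand x (y / 2)) ?_ ?_
    (integrable_integrand σ hhalf) (ae_of_all _ fun t => ?_)
  · filter_upwards [eventually_ne_nhds hy.ne'] with z hz
    exact (continuous_integrand hz).aestronglyMeasurable
  · filter_upwards [eventually_gt_nhds (half_lt_self hy)] with z hz
    exact ae_of_all _ (norm_integrand_le hhalf hz.le)
  · unfold integrand
    exact ContinuousAt.div (by fun_prop) (by fun_prop) (by positivity)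

lemma integral_integrand_strictAntiOn (hσ : σ ≠ 0) :
    StrictAntiOn (fun y => ∫ t, integrand x y t ∂σ) (Ioi 0) :=
  fun _ hy₁ _ hy₂ hlt => integral_lt_integral_of_forall_lt hσ (integrable_integrand σ hy₂)
    (integrable_integrand σ hy₁) fun t => integrand_strictAntiOn t hy₁ hy₂ hlt

lemma tendsto_integral_integrand_atTop :
    Tendsto (fun y => ∫ t, integrand x y t ∂σ) atTop (nhds 0) := by
  have hlim : ∀ t, Tendsto (fun y => integrand x y t) atTop (nhds 0) := fun t =>
    tendsto_const_nhds.div_atTop <|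
      tendsto_atTop_add_const_left _ _ (tendsto_pow_atTop two_ne_zero)
  simpa using tendsto_integral_filter_of_dominated_convergence (integrand x 1)
    (eventually_ne_atTop 0 |>.mono fun y hy => (continuous_integrand hy).aestronglyMeasurable)
    (eventually_ge_atTop 1 |>.mono fun y hy => ae_of_all _ (norm_integrand_le one_pos hy))
    (integrable_integrand σ one_pos) (ae_of_all _ hlim)

lemma ofReal_integrand (hy : y ≠ 0) (t : ℝ) :
    ENNReal.ofReal (integrand x y t) =
      ENNReal.ofReal (1 + t ^ 2) / ENNReal.ofReal ((t - x) ^ 2 + y ^ 2) :=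
  ENNReal.ofReal_div_of_pos (by positivity)

lemma tendsto_ofReal_integrand_nhds_zero (t : ℝ) :
    Tendsto (fun y => ENNReal.ofReal (1 + t ^ 2) / ENNReal.ofReal ((t - x) ^ 2 + y ^ 2)) (nhds 0)
      (nhds (ENNReal.ofReal (1 + t ^ 2) / ENNReal.ofReal ((t - x) ^ 2))) := by
  have hden : Tendsto (fun y : ℝ => ENNReal.ofReal ((t - x) ^ 2 + y ^ 2)) (nhds 0)
      (nhds (ENNReal.ofReal ((t - x) ^ 2))) := by
    simpa [Function.comp_def] using (ENNReal.continuous_ofReal.comp (by fun_prop : Continuous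
      fun y : ℝ => (t - x) ^ 2 + y ^ 2)).tendsto 0
  exact ENNReal.Tendsto.const_mul (tendsto_inv_iff.mpr hden) (Or.inr ENNReal.ofReal_ne_top)

lemma singIntegral_eq_iSup :
    singIntegral σ x = ⨆ y ∈ Ioi (0 : ℝ), ENNReal.ofReal (∫ t, integrand x y t ∂σ) := by
  have hofReal : ∀ y, 0 < y → ENNReal.ofReal (∫ t, integrand x y t ∂σ) =
      ∫⁻ t, ENNReal.ofReal (1 + t ^ 2) / ENNReal.ofReal ((t - x) ^ 2 + y ^ 2) ∂σ := fun y hy => by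
    rw [ofReal_integral_eq_lintegral_ofReal (integrable_integrand σ hy)
      (ae_of_all _ fun t => (integrand_pos hy.ne' t).le)]
    exact lintegral_congr fun t => ofReal_integrand hy.ne' t
  refine le_antisymm ?_ (iSup₂_le fun y hy => ?_)
  · set u : ℕ → ℝ := fun n => 1 / (n + 1)
    have hu : ∀ n, 0 < u n := fun n => Nat.one_div_pos_of_nat
    have hmono : Tendsto (fun n => ENNReal.ofReal (∫ t, integrand x (u n) t ∂σ)) atTop
        (nhds (singIntegral σ x)) := by
      simp_rw [hofReal _ (hu _), singIntegral]
      refine lintegral_tendsto_of_tendsto_of_monotone (fun n => ?_) (ae_of_all _ fun t => ?_)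
        (ae_of_all _ fun t => (tendsto_ofReal_integrand_nhds_zero t).comp
          tendsto_one_div_add_atTop_nhds_zero_nat)
      · fun_prop
      · intro m n hmn
        simp only [← ofReal_integrand (hu _).ne']
        refine ENNReal.ofReal_le_ofReal ((integrand_strictAntiOn t).antitoneOn (hu n) (hu m) ?_)
        exact Nat.one_div_le_one_div hmn
    exact le_of_tendsto' hmono fun n => le_iSup₂_of_le (u n) (hu n) le_rfl
  · rw [hofReal y hy]
    exact lintegral_mono fun t => ENNReal.div_le_div_left (ENNReal.ofReal_le_ofReal
      (le_add_of_nonneg_right (sq_nonneg y))) _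

end SingIntegral

open SingIntegral in
theorem stmt3 (σ : Measure ℝ) [IsFiniteMeasure σ] (hσ : σ ≠ 0) (x : ℝ)
    (g : ℝ → ℝ)
    (hg : ∀ y : ℝ, g y = ∫ t : ℝ, (1 + t ^ 2) / ((t - x) ^ 2 + y ^ 2) ∂σ) :
    ContinuousOn g (Set.Ioi 0) ∧
    StrictAntiOn g (Set.Ioi 0) ∧
    Tendsto g atTop (nhds 0) ∧
    (∀ y₁ y₂ : ℝ, 0 < y₁ → 0 < y₂ → g y₁ = 1 → g y₂ = 1 → y₁ = y₂) ∧
    ((∃ y : ℝ, 0 < y ∧ g y = 1) ↔ 1 < singIntegral σ x) := by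
  obtain rfl : g = fun y => ∫ t, integrand x y t ∂σ := funext hg
  have hcont : ContinuousOn (fun y => ∫ t, integrand x y t ∂σ) (Ioi 0) := fun y hy =>
    (continuousAt_integral_integrand σ hy).continuousWithinAt
  have hanti := integral_integrand_strictAntiOn σ (x := x) hσ
  have hlim := tendsto_integral_integrand_atTop σ (x := x)
  refine ⟨hcont, hanti, hlim, fun y₁ y₂ hy₁ hy₂ h₁ h₂ => hanti.injOn hy₁ hy₂ (h₁.trans h₂.symm), ?_⟩
  simp_rw [singIntegral_eq_iSup, lt_biSup_iff, ENNReal.one_lt_ofReal]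
  constructor
  · rintro ⟨y, hy, hgy⟩
    exact ⟨y / 2, half_pos hy, hgy ▸ hanti (half_pos hy) hy (half_lt_self hy)⟩
  · rintro ⟨y, hy, hgy⟩
    exact isPreconnected_Ioi.intermediate_value_Ioc hy (le_principal_iff.mpr (Ioi_mem_atTop 0))
      hcont hlim ⟨zero_lt_one, hgy.le⟩
end

section
/- Let σ be a finite Borel measure on ℝ such that ∫ (1 + t²)/t² dσ(t) < ∞ (integral over ℝ, interpreted as +∞ if σ({0}) > 0, so in particular σ({0}) = 0). Then the function t ↦ 1/t is σ-integrable, and with H(z) = z + γ + ∫ (1 + t z)/(z - t) dσ(t) one has lim_{ε → 0⁺} H(iε) = γ - ∫ (1/t) dσ(t), a real number. -/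
open MeasureTheory Filter Complex

/-!
For every `t ≠ 0` the kernel `(1 + t z) / (z - t)` tends to `-1 / t` as `z = iε → 0`, and for
`0 < ε ≤ 1` its modulus is at most `(1 + t²) / t²`, which the hypothesis makes σ-integrable
(the same function dominates `|1 / t|`). Dominated convergence gives the limit of the integral,
and `iε + γ → γ`.
-/

open Topology

noncomputable def nevanlinnaKernel (z : ℂ) (t : ℝ) : ℂ := (1 + t * z) / (z - t)

lemma nevanlinnaKernel_zero (t : ℝ) : nevanlinnaKernel 0 t = ((-(1 / t) : ℝ) : ℂ) := by
  simp [nevanlinnaKernel, div_neg]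

lemma continuousAt_nevanlinnaKernel {t : ℝ} (ht : t ≠ 0) :
    ContinuousAt (fun z => nevanlinnaKernel z t) 0 := by
  have : (0 : ℂ) - t ≠ 0 := by simpa using ht
  unfold nevanlinnaKernel
  fun_prop (disch := exact this)

lemma norm_nevanlinnaKernel_mul_I_le {ε t : ℝ} (hε : |ε| ≤ 1) (ht : t ≠ 0) :
    ‖nevanlinnaKernel (ε * I) t‖ ≤ (1 + t ^ 2) / t ^ 2 := by
  have ht2 : 0 < t ^ 2 := by positivity
  have hε2 : ε ^ 2 ≤ 1 := (sq_le_one_iff_abs_le_one ε).2 hε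
  have hnum : ‖1 + (t : ℂ) * (ε * I)‖ ^ 2 = 1 + t ^ 2 * ε ^ 2 := by
    rw [show 1 + (t : ℂ) * (ε * I) = (1 : ℝ) + (t * ε : ℝ) * I by push_cast; ring,
      Complex.sq_norm, normSq_add_mul_I]
    ring
  have hden : ‖(ε : ℂ) * I - t‖ ^ 2 = ε ^ 2 + t ^ 2 := by
    rw [show (ε : ℂ) * I - t = (-t : ℝ) + (ε : ℝ) * I by push_cast; ring,
      Complex.sq_norm, normSq_add_mul_I]
    ring
  have hone : 1 ≤ (1 + t ^ 2) / t ^ 2 := by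
    rw [le_div_iff₀ ht2]; linarith
  have hsq : ‖nevanlinnaKernel (ε * I) t‖ ^ 2 ≤ (1 + t ^ 2) / t ^ 2 := by
    rw [nevanlinnaKernel, norm_div, div_pow, hnum, hden, div_le_div_iff₀ (by positivity) ht2]
    nlinarith [mul_le_mul_of_nonneg_left hε2 (sq_nonneg (t ^ 2))]
  refine le_of_pow_le_pow_left₀ two_ne_zero (by positivity) (hsq.trans ?_)
  nlinarith

lemma tendsto_ofReal_mul_I_nhdsGT : Tendsto (fun ε : ℝ => (ε : ℂ) * I) (𝓝[>] 0) (𝓝 0) :=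
  (Continuous.tendsto' (by fun_prop) 0 0 (by simp)).mono_left nhdsWithin_le_nhds

lemma abs_one_div_le_one_add_sq_div_sq (t : ℝ) : |1 / t| ≤ (1 + t ^ 2) / t ^ 2 := by
  rcases eq_or_ne t 0 with rfl | ht
  · simp
  rw [abs_div, abs_one, div_le_div_iff₀ (abs_pos.2 ht) (by positivity)]
  nlinarith [sq_abs t, abs_nonneg t, sq_nonneg (|t| - 1)]

section

variable {μ : Measure ℝ}
  (hL : ∫⁻ t : ℝ, ENNReal.ofReal (1 + t ^ 2) / ENNReal.ofReal (t ^ 2) ∂μ < ⊤)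
include hL

/-- The integrand is `1 / 0 = ⊤` at `t = 0`, so a finite integral rules out an atom there. -/
lemma ae_ne_zero_of_lintegral_one_add_sq_div_sq_lt_top : ∀ᵐ t ∂μ, t ≠ 0 := by
  filter_upwards [ae_lt_top (by fun_prop) hL.ne] with t ht h0
  simp [h0] at ht

lemma integrable_one_add_sq_div_sq : Integrable (fun t : ℝ => (1 + t ^ 2) / t ^ 2) μ := by
  refine ⟨(by fun_prop : Measurable _).aestronglyMeasurable,
    (hasFiniteIntegral_iff_ofReal (Eventually.of_forall fun t => by positivity)).2 ?_⟩
  refine lt_of_eq_of_lt (lintegral_congr_ae ?_) hL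
  filter_upwards [ae_ne_zero_of_lintegral_one_add_sq_div_sq_lt_top hL] with t ht
  exact ENNReal.ofReal_div_of_pos (by positivity)

lemma integrable_one_div : Integrable (fun t : ℝ => 1 / t) μ :=
  (integrable_one_add_sq_div_sq hL).mono (by fun_prop) (Eventually.of_forall fun t => by
    rw [Real.norm_eq_abs, Real.norm_eq_abs,
      abs_of_nonneg (by positivity : 0 ≤ (1 + t ^ 2) / t ^ 2)]
    exact abs_one_div_le_one_add_sq_div_sq t)

lemma tendsto_integral_nevanlinnaKernel_mul_I :
    Tendsto (fun ε : ℝ => ∫ t, nevanlinnaKernel (ε * I) t ∂μ) (𝓝[>] 0)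
      (𝓝 (-(∫ t, 1 / t ∂μ : ℝ))) := by
  have hae := ae_ne_zero_of_lintegral_one_add_sq_div_sq_lt_top hL
  have hbound : ∀ᶠ ε : ℝ in 𝓝[>] 0,
      ∀ᵐ t ∂μ, ‖nevanlinnaKernel (ε * I) t‖ ≤ (1 + t ^ 2) / t ^ 2 := by
    filter_upwards [Ioc_mem_nhdsGT one_pos] with ε hε
    filter_upwards [hae] with t ht
    exact norm_nevanlinnaKernel_mul_I_le (abs_le.2 ⟨by linarith [hε.1], hε.2⟩) ht
  have hpointwise : ∀ᵐ t ∂μ, Tendsto (fun ε : ℝ => nevanlinnaKernel (ε * I) t) (𝓝[>] 0)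
      (𝓝 ((-(1 / t) : ℝ) : ℂ)) := by
    filter_upwards [hae] with t ht
    rw [← nevanlinnaKernel_zero]
    exact (continuousAt_nevanlinnaKernel ht).tendsto.comp tendsto_ofReal_mul_I_nhdsGT
  have hmeas : ∀ ε : ℝ, Measurable (nevanlinnaKernel (ε * I)) := fun ε => by
    unfold nevanlinnaKernel; fun_prop
  have h := tendsto_integral_filter_of_dominated_convergence _
    (Eventually.of_forall fun ε => (hmeas ε).aestronglyMeasurable) hbound
    (integrable_one_add_sq_div_sq hL) hpointwise
  rwa [integral_complex_ofReal, integral_neg, ofReal_neg] at h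

end

theorem stmt7_general (σ : Measure ℝ) (γ : ℝ)
    (hL : (∫⁻ t : ℝ, ENNReal.ofReal (1 + t ^ 2) / ENNReal.ofReal (t ^ 2) ∂σ) < ⊤)
    (H : ℂ → ℂ)
    (hH : ∀ z : ℂ, 0 < z.im →
      H z = z + (γ : ℂ) + ∫ t : ℝ, (1 + (t : ℂ) * z) / (z - (t : ℂ)) ∂σ) :
    Integrable (fun t : ℝ => 1 / t) σ ∧
    Tendsto (fun ε : ℝ => H ((ε : ℂ) * Complex.I))
      (nhdsWithin 0 (Set.Ioi 0))
      (nhds ((γ - ∫ t : ℝ, 1 / t ∂σ : ℝ) : ℂ)) := by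
  refine ⟨integrable_one_div hL, ?_⟩
  have hH_eq : ∀ᶠ ε : ℝ in 𝓝[>] 0,
      ε * I + γ + ∫ t, nevanlinnaKernel (ε * I) t ∂σ = H (ε * I) :=
    eventually_mem_nhdsWithin.mono fun ε hε => (hH _ (by simpa using hε)).symm
  have hlim := (tendsto_ofReal_mul_I_nhdsGT.add_const (γ : ℂ)).add
    (tendsto_integral_nevanlinnaKernel_mul_I hL)
  convert hlim.congr' hH_eq using 2
  push_cast
  ring

theorem stmt7 (σ : Measure ℝ) [IsFiniteMeasure σ] (γ : ℝ)
    (hatom : σ {0} = 0)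
    (hL : (∫⁻ t : ℝ, ENNReal.ofReal (1 + t ^ 2) / ENNReal.ofReal (t ^ 2) ∂σ) < ⊤)
    (H : ℂ → ℂ)
    (hH : ∀ z : ℂ, 0 < z.im →
      H z = z + (γ : ℂ) + ∫ t : ℝ, (1 + (t : ℂ) * z) / (z - (t : ℂ)) ∂σ) :
    Integrable (fun t : ℝ => 1 / t) σ ∧
    Tendsto (fun ε : ℝ => H ((ε : ℂ) * Complex.I))
      (nhdsWithin 0 (Set.Ioi 0))
      (nhds ((γ - ∫ t : ℝ, 1 / t ∂σ : ℝ) : ℂ)) :=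
  stmt7_general σ γ hL H hH
end

section
/- For λ ≥ 1, the function s(t) = √(4λ − (t − 1 − λ)²)/(2πt) on the interval ((1−√λ)², (1+√λ)²) (and 0 elsewhere) is a probability density: s ≥ 0 on its support and ∫_ℝ s(t) dt = 1. -/
/-!
Write `λ = r²` with `r ≥ 1`, so that the support is `[(1 - r)², (1 + r)²]` and
`4λ - (t - 1 - λ)² = (t - (1 - r)²) ((1 + r)² - t)`. The density is the derivative of
`F(t) = (√(4λ - (t - 1 - λ)²) + (1 + λ) arcsin ((t - 1 - λ) / 2r)
  - (λ - 1) arcsin (((1 + λ) t - (λ - 1)²) / 2rt)) / 2π`,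
and both arcsin arguments run from `-1` to `1` across the support, so the total mass is
`F((1 + r)²) - F((1 - r)²) = 1/2 - (-1/2)`.
-/

open MeasureTheory Real Set

theorem intervalIntegral.integral_eq_sub_of_hasDerivAt_of_nonneg {f f' : ℝ → ℝ} {a b : ℝ}
    (hab : a ≤ b) (hcont : ContinuousOn f (Icc a b)) (hderiv : ∀ x ∈ Ioo a b, HasDerivAt f (f' x) x)
    (hpos : ∀ x ∈ Ioo a b, 0 ≤ f' x) : ∫ x in a..b, f' x = f b - f a :=
  intervalIntegral.integral_eq_sub_of_hasDerivAt_of_le hab hcont hderiv <|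
    (intervalIntegrable_iff_integrableOn_Ioc_of_le hab).2 <|
      intervalIntegral.integrableOn_deriv_of_nonneg hcont hderiv hpos

theorem hasDerivAt_arcsin_comp_of_sq_add_sq {u : ℝ → ℝ} {u' w x : ℝ} (hu : HasDerivAt u u' x)
    (hw : 0 < w) (h : u x ^ 2 + w ^ 2 = 1) :
    HasDerivAt (fun t => arcsin (u t)) (u' / w) x := by
  have h₁ : u x ≠ -1 := fun h' => by nlinarith
  have h₂ : u x ≠ 1 := fun h' => by nlinarith
  have hsqrt : √(1 - u x ^ 2) = w := by
    rw [show 1 - u x ^ 2 = w ^ 2 by linarith, sqrt_sq hw.le]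
  exact ((hasDerivAt_arcsin h₁ h₂).comp x hu).congr_deriv (by rw [hsqrt]; ring)

noncomputable section

namespace MarchenkoPastur

variable {r x : ℝ}

def radicand (r t : ℝ) : ℝ := 4 * r ^ 2 - (t - 1 - r ^ 2) ^ 2

def density (r t : ℝ) : ℝ := √(radicand r t) / (2 * π * t)

def primitive (r t : ℝ) : ℝ :=
  (√(radicand r t) + (1 + r ^ 2) * arcsin ((t - 1 - r ^ 2) / (2 * r))
    - (r ^ 2 - 1) * arcsin (((1 + r ^ 2) * t - (r ^ 2 - 1) ^ 2) / (2 * r * t))) / (2 * π)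

theorem radicand_eq (r t : ℝ) : radicand r t = (t - (1 - r) ^ 2) * ((1 + r) ^ 2 - t) := by
  unfold radicand; ring

theorem radicand_pos (hx : x ∈ Ioo ((1 - r) ^ 2) ((1 + r) ^ 2)) : 0 < radicand r x := by
  rw [radicand_eq]; exact mul_pos (sub_pos.2 hx.1) (sub_pos.2 hx.2)

theorem density_nonneg (hx : 0 ≤ x) : 0 ≤ density r x := by
  unfold density; positivity

theorem hasDerivAt_sqrt_radicand (hx : 0 < radicand r x) :
    HasDerivAt (fun t => √(radicand r t)) (-(x - 1 - r ^ 2) / √(radicand r x)) x := by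
  have h : HasDerivAt (radicand r) (-(2 * (x - 1 - r ^ 2))) x := by
    refine ((((hasDerivAt_id' x).sub_const 1).sub_const (r ^ 2)).fun_pow 2
      |>.const_sub (4 * r ^ 2)).congr_deriv ?_
    push_cast; ring
  convert h.sqrt hx.ne' using 1
  field_simp

theorem hasDerivAt_arcsin_shift (hr : 0 < r) (hx : 0 < radicand r x) :
    HasDerivAt (fun t => arcsin ((t - 1 - r ^ 2) / (2 * r))) (1 / √(radicand r x)) x := by
  have hq := sq_sqrt hx.le
  have hu : HasDerivAt (fun t => (t - 1 - r ^ 2) / (2 * r)) (1 / (2 * r)) x := by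
    simpa using (((hasDerivAt_id x).sub_const 1).sub_const (r ^ 2)).div_const (2 * r)
  refine (hasDerivAt_arcsin_comp_of_sq_add_sq hu (w := √(radicand r x) / (2 * r))
    (by positivity) ?_).congr_deriv (by field_simp)
  rw [div_pow, div_pow, hq]; unfold radicand; field_simp; ring

theorem hasDerivAt_arcsin_mobius (hr : 1 < r) (hx₀ : 0 < x) (hx : 0 < radicand r x) :
    HasDerivAt (fun t => arcsin (((1 + r ^ 2) * t - (r ^ 2 - 1) ^ 2) / (2 * r * t)))
      ((r ^ 2 - 1) / (x * √(radicand r x))) x := by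
  have hq := sq_sqrt hx.le
  have hc : 0 < r ^ 2 - 1 := by nlinarith
  have hu : HasDerivAt (fun t => ((1 + r ^ 2) * t - (r ^ 2 - 1) ^ 2) / (2 * r * t))
      ((r ^ 2 - 1) ^ 2 / (2 * r * x ^ 2)) x := by
    have h₁ := ((hasDerivAt_id x).const_mul (1 + r ^ 2)).sub_const ((r ^ 2 - 1) ^ 2)
    have h₂ := (hasDerivAt_id x).const_mul (2 * r)
    refine (h₁.div h₂ (by positivity)).congr_deriv ?_
    simp only [id, mul_one]; field_simp; ring
  refine (hasDerivAt_arcsin_comp_of_sq_add_sq hu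
    (w := (r ^ 2 - 1) * √(radicand r x) / (2 * r * x)) (by positivity) ?_).congr_deriv
    (by field_simp)
  rw [div_pow, div_pow, mul_pow _ √(radicand r x), hq]; unfold radicand; field_simp; ring

theorem hasDerivAt_primitive (hr : 1 ≤ r) (hx : x ∈ Ioo ((1 - r) ^ 2) ((1 + r) ^ 2)) :
    HasDerivAt (primitive r) (density r x) x := by
  have hx₀ : 0 < x := (sq_nonneg _).trans_lt hx.1
  have hQ := radicand_pos hx
  have hq := sq_sqrt hQ.le
  have hmobius : HasDerivAt
      (fun t => (r ^ 2 - 1) * arcsin (((1 + r ^ 2) * t - (r ^ 2 - 1) ^ 2) / (2 * r * t)))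
      ((r ^ 2 - 1) ^ 2 / (x * √(radicand r x))) x := by
    rcases hr.eq_or_lt with rfl | hr
    · simpa using hasDerivAt_const x (0 : ℝ)
    · exact ((hasDerivAt_arcsin_mobius hr hx₀ hQ).const_mul _).congr_deriv (by ring)
  refine (((hasDerivAt_sqrt_radicand hQ).add
    ((hasDerivAt_arcsin_shift (by linarith) hQ).const_mul (1 + r ^ 2))).sub hmobius
    |>.div_const (2 * π)).congr_deriv ?_
  unfold density
  field_simp
  rw [hq]; unfold radicand; ring

theorem continuousOn_primitive (hr : 1 ≤ r) :
    ContinuousOn (primitive r) (Icc ((1 - r) ^ 2) ((1 + r) ^ 2)) := by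
  have hmobius : ContinuousOn
      (fun t => (r ^ 2 - 1) * arcsin (((1 + r ^ 2) * t - (r ^ 2 - 1) ^ 2) / (2 * r * t)))
      (Icc ((1 - r) ^ 2) ((1 + r) ^ 2)) := by
    rcases hr.eq_or_lt with rfl | hr
    · simpa using continuousOn_const
    · have ha : 0 < (1 - r) ^ 2 := by nlinarith
      refine continuousOn_const.mul (continuous_arcsin.comp_continuousOn ?_)
      exact ContinuousOn.div (by fun_prop) (by fun_prop) fun t ht => by
        have := ha.trans_le ht.1; positivity
  unfold primitive radicand
  exact ((Continuous.continuousOn (by fun_prop)).sub hmobius).div_const _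

theorem primitive_right (hr : 0 < r) : primitive r ((1 + r) ^ 2) = 1 / 2 := by
  have h₁ : radicand r ((1 + r) ^ 2) = 0 := by rw [radicand_eq]; ring
  have h₂ : ((1 + r) ^ 2 - 1 - r ^ 2) / (2 * r) = 1 := by field_simp; ring
  have h₃ : ((1 + r ^ 2) * (1 + r) ^ 2 - (r ^ 2 - 1) ^ 2) / (2 * r * (1 + r) ^ 2) = 1 := by
    field_simp; ring
  unfold primitive
  rw [h₁, h₂, h₃, sqrt_zero, arcsin_one]
  field_simp; ring

theorem primitive_left (hr : 0 < r) : primitive r ((1 - r) ^ 2) = -1 / 2 := by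
  have h₁ : radicand r ((1 - r) ^ 2) = 0 := by rw [radicand_eq]; ring
  have h₂ : ((1 - r) ^ 2 - 1 - r ^ 2) / (2 * r) = -1 := by field_simp; ring
  have h₃ : (r ^ 2 - 1) * arcsin (((1 + r ^ 2) * (1 - r) ^ 2 - (r ^ 2 - 1) ^ 2)
      / (2 * r * (1 - r) ^ 2)) = (r ^ 2 - 1) * -(π / 2) := by
    -- at `r = 1` the endpoint is `0`, where the arcsin argument is junk but its coefficient is `0`
    rcases eq_or_ne r 1 with rfl | hr₁
    · norm_num
    · have : (1 - r) ^ 2 ≠ 0 := pow_ne_zero _ (sub_ne_zero.2 hr₁.symm)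
      rw [← arcsin_neg_one]
      congr 2
      field_simp; ring
  unfold primitive
  rw [h₁, h₂, h₃, sqrt_zero, arcsin_neg_one]
  field_simp; ring

theorem integral_density (hr : 1 ≤ r) : ∫ t in (1 - r) ^ 2..(1 + r) ^ 2, density r t = 1 := by
  rw [intervalIntegral.integral_eq_sub_of_hasDerivAt_of_nonneg (by nlinarith)
    (continuousOn_primitive hr) (fun x hx => hasDerivAt_primitive hr hx)
    (fun x hx => density_nonneg ((sq_nonneg _).trans hx.1.le)),
    primitive_right (by linarith), primitive_left (by linarith)]
  norm_num

end MarchenkoPastur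

end

open MarchenkoPastur

theorem stmt13 (lam : ℝ) (hlam : 1 ≤ lam)
    (s : ℝ → ℝ)
    (hs : ∀ t : ℝ, s t =
      if t ∈ Set.Ioo ((1 - Real.sqrt lam) ^ 2) ((1 + Real.sqrt lam) ^ 2) then
        Real.sqrt (4 * lam - (t - 1 - lam) ^ 2) / (2 * Real.pi * t)
      else 0) :
    (∀ t : ℝ, 0 ≤ s t) ∧ ∫ t : ℝ, s t = 1 := by
  obtain ⟨r, hr, rfl⟩ : ∃ r, 1 ≤ r ∧ lam = r ^ 2 :=
    ⟨√lam, one_le_sqrt.2 hlam, (sq_sqrt (by linarith)).symm⟩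
  have hs_eq : s = (Ioo ((1 - r) ^ 2) ((1 + r) ^ 2)).indicator (density r) := by
    funext t
    rw [hs, sqrt_sq (by linarith), indicator_apply]
    rfl
  subst hs_eq
  refine ⟨indicator_nonneg fun t ht => density_nonneg ((sq_nonneg _).trans ht.1.le), ?_⟩
  rw [integral_indicator measurableSet_Ioo, ← integral_Ioc_eq_integral_Ioo,
    ← intervalIntegral.integral_of_le (by nlinarith), integral_density hr]
end

section
/- Let σ, σ₁, σ₂, … be finite Borel measures on ℝ with σₙ → σ weakly, and suppose xₙ → x₀ in ℝ, uₙ → u₀ with uₙ ≥ 2δ > 0, and ∫ (1+t²)/((t−xₙ)² + uₙ²) dσₙ(t) = 1 for all n. Then ∫ (1+t²)/((t−x₀)² + (2δ)²) dσ(t) ≥ 1. -/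
open MeasureTheory Filter

set_option maxHeartbeats 1000000 in
theorem stmt16 (σ : Measure ℝ) (σn : ℕ → Measure ℝ)
    [IsFiniteMeasure σ] [∀ n, IsFiniteMeasure (σn n)]
    (hweak : ∀ f : BoundedContinuousFunction ℝ ℝ,
      Tendsto (fun n => ∫ t : ℝ, f t ∂(σn n)) atTop (nhds (∫ t : ℝ, f t ∂σ)))
    (x₀ : ℝ) (xn : ℕ → ℝ) (hx : Tendsto xn atTop (nhds x₀))
    (u₀ : ℝ) (un : ℕ → ℝ) (hu : Tendsto un atTop (nhds u₀))
    (δ : ℝ) (hδ : 0 < δ) (hun : ∀ n, 2 * δ ≤ un n)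
    (hint : ∀ n, (∫ t : ℝ, (1 + t ^ 2) / ((t - xn n) ^ 2 + (un n) ^ 2) ∂(σn n)) = 1) :
    1 ≤ ∫ t : ℝ, (1 + t ^ 2) / ((t - x₀) ^ 2 + (2 * δ) ^ 2) ∂σ := by
  have hδ2 : (0:ℝ) < (2*δ)^2 := by positivity
  set g : ℝ → ℝ := fun t => (1 + t^2)/((t - x₀)^2 + (2*δ)^2) with hg
  have hgc : Continuous g := by
    apply Continuous.div (by continuity) (by continuity)
    intro t; positivity
  have hgnn : ∀ t, 0 ≤ g t := fun t => by positivity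
  have hgb : ∀ t, ‖g t‖ ≤ 2 + (1 + 2*x₀^2)/(2*δ)^2 := by
    intro t
    rw [Real.norm_eq_abs, abs_of_nonneg (hgnn t)]
    rw [hg]
    rw [div_le_iff₀ (by positivity)]
    have hc : (1 + 2*x₀^2)/(2*δ)^2 * (2*δ)^2 = 1 + 2*x₀^2 :=
      div_mul_cancel₀ _ (ne_of_gt hδ2)
    have h1 : (0:ℝ) ≤ (1 + 2*x₀^2)/(2*δ)^2 := by positivity
    nlinarith [sq_nonneg (t - x₀), sq_nonneg x₀, mul_nonneg h1 (sq_nonneg (t - x₀))]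
  set G : BoundedContinuousFunction ℝ ℝ :=
    BoundedContinuousFunction.ofNormedAddCommGroup g hgc _ hgb with hGdef
  have hGg : ⇑G = g := rfl
  have hL := hweak G
  rw [hGg] at hL
  set I : ℝ := ∫ t, g t ∂σ with hI
  have hInn : 0 ≤ I := integral_nonneg hgnn
  have key : ∀ ε > (0:ℝ), 1 ≤ (1 + ε + (ε + ε^2)/(2*δ)^2) * I := by
    intro ε hε
    set C : ℝ := 1 + ε + (ε + ε^2)/(2*δ)^2 with hC
    have hCnn : (0:ℝ) ≤ C := by positivity
    have hev : ∀ᶠ n in atTop, |xn n - x₀| < ε := by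
      have := (hx.sub_const x₀).abs
      simpa using this (Iio_mem_nhds (by simpa using hε))
    have hstep : ∀ᶠ n in atTop, (1:ℝ) ≤ C * (∫ t, g t ∂(σn n)) := by
      filter_upwards [hev] with n hn
      have hfnle : ∀ t, (1 + t^2)/((t - xn n)^2 + (un n)^2) ≤ C * g t := by
        intro t
        have hA : (1 + t^2)/((t - xn n)^2 + (un n)^2)
            ≤ (1 + t^2)/((t - xn n)^2 + (2*δ)^2) := by
          apply div_le_div_of_nonneg_left (by positivity) (by positivity)
          have h2 := hun n
          nlinarith
        have keyq : (t - x₀)^2 + (2*δ)^2 ≤ C * ((t - xn n)^2 + (2*δ)^2) := by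
          have hd := abs_lt.mp hn
          have hcancel : (ε + ε^2)/(2*δ)^2 * (2*δ)^2 = ε + ε^2 :=
            div_mul_cancel₀ _ (ne_of_gt hδ2)
          have hqnn : (0:ℝ) ≤ (ε + ε^2)/(2*δ)^2 := by positivity
          have hd2 : (xn n - x₀)^2 ≤ ε^2 := sq_le_sq' hd.1.le hd.2.le
          have h2ad : 2*(t - xn n)*(xn n - x₀) ≤ ε*(t - xn n)^2 + ε := by
            nlinarith [sq_nonneg (ε*(t - xn n) - (xn n - x₀)), hd2, hε, mul_pos hε hε]
          rw [hC]
          nlinarith [h2ad, hd2, hcancel,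
            mul_nonneg hqnn (sq_nonneg (t - xn n)), mul_nonneg hε.le hδ2.le]
        have hB : (1 + t^2)/((t - xn n)^2 + (2*δ)^2) ≤ C * g t := by
          rw [hg, ← mul_div_assoc, div_le_div_iff₀ (by positivity) (by positivity)]
          nlinarith [mul_le_mul_of_nonneg_left keyq (show (0:ℝ) ≤ 1 + t^2 by positivity)]
        exact hA.trans hB
      calc (1:ℝ) = ∫ t, (1 + t^2)/((t - xn n)^2 + (un n)^2) ∂(σn n) := (hint n).symm
        _ ≤ ∫ t, C * g t ∂(σn n) := by
            have hgi : Integrable g (σn n) := by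
              have := G.integrable (σn n); rwa [hGg] at this
            refine integral_mono_of_nonneg (ae_of_all _ fun t => ?_)
              (hgi.const_mul C) (ae_of_all _ hfnle)
            positivity
        _ = C * ∫ t, g t ∂(σn n) := integral_const_mul C g
    exact ge_of_tendsto (hL.const_mul C) hstep
  have hcont : Tendsto (fun ε : ℝ => (1 + ε + (ε + ε^2)/(2*δ)^2) * I)
      (nhdsWithin 0 (Set.Ioi 0)) (nhds I) := by
    have h0 : (1 + (0:ℝ) + ((0:ℝ) + (0:ℝ)^2)/(2*δ)^2) * I = I := by
      simp
    have hcts : Continuous (fun ε : ℝ => (1 + ε + (ε + ε^2)/(2*δ)^2) * I) := by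
      fun_prop (disch := positivity)
    have := (hcts.tendsto 0).mono_left (nhdsWithin_le_nhds (s := Set.Ioi (0:ℝ)))
    rwa [h0] at this
  exact ge_of_tendsto hcont (by
    filter_upwards [self_mem_nhdsWithin] with ε hε
    exact key ε hε)
end

section
/- Let σ be a finite Borel measure on ℝ, γ ∈ ℝ, and H(z) = z + γ + ∫ (1+tz)/(z−t) dσ(t) on the upper half-plane. Suppose x ∈ ℝ satisfies ∫ (1+t²)/(t−x)² dσ(t) ≤ 1 (extended-real integral). Then Im H(x + iy) ≥ 0 for all y > 0, and Im H(x + iy)/y → 1 − ∫ (1+t²)/(t−x)² dσ(t) as y → 0⁺. -/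
/-!
Since `(1 + t z)/(z - t) = t + (1 + t²)/(z - t)`, taking imaginary parts at `z = x + iy` gives
`Im H(x + iy) = y (1 - ∫ (1 + t²)/((t - x)² + y²) dσ(t))`. The integrand increases to
`(1 + t²)/(t - x)²` as `y → 0`, and that limit has integral at most `1`; so the integral is
at most `1` for every `y`, and by dominated convergence it tends to `∫ (1 + t²)/(t - x)² dσ`.
-/

open MeasureTheory Filter Complex Topology
open scoped ENNReal

noncomputable def nevanlinnaWeight (x y t : ℝ) : ℝ≥0∞ :=
  ENNReal.ofReal (1 + t ^ 2) / ENNReal.ofReal ((t - x) ^ 2 + y ^ 2)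

section Weight

variable (x : ℝ)

lemma nevanlinnaWeight_zero (t : ℝ) :
    nevanlinnaWeight x 0 t = ENNReal.ofReal (1 + t ^ 2) / ENNReal.ofReal ((t - x) ^ 2) := by
  simp [nevanlinnaWeight]

lemma nevanlinnaWeight_le_nevanlinnaWeight_zero (y t : ℝ) :
    nevanlinnaWeight x y t ≤ nevanlinnaWeight x 0 t := by
  unfold nevanlinnaWeight
  exact ENNReal.div_le_div_left (ENNReal.ofReal_le_ofReal (by simp [sq_nonneg])) _

lemma measurable_nevanlinnaWeight (y : ℝ) : Measurable (nevanlinnaWeight x y) := by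
  unfold nevanlinnaWeight
  fun_prop

-- Continuity holds also at `y = 0`, where the weight at `t = x` is `∞` since `a / 0 = ∞` in `ℝ≥0∞`.
lemma continuous_nevanlinnaWeight (t : ℝ) : Continuous fun y => nevanlinnaWeight x y t := by
  simp only [nevanlinnaWeight, div_eq_mul_inv]
  exact (ENNReal.continuous_const_mul ENNReal.ofReal_ne_top).comp
    (ENNReal.continuous_ofReal.comp (by fun_prop)).inv

lemma tendsto_lintegral_nevanlinnaWeight (σ : Measure ℝ)
    (hfin : ∫⁻ t, nevanlinnaWeight x 0 t ∂σ ≠ ∞) :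
    Tendsto (fun y => ∫⁻ t, nevanlinnaWeight x y t ∂σ) (𝓝 0)
      (𝓝 (∫⁻ t, nevanlinnaWeight x 0 t ∂σ)) :=
  tendsto_lintegral_filter_of_dominated_convergence _
    (Eventually.of_forall (measurable_nevanlinnaWeight x))
    (Eventually.of_forall fun y => ae_of_all _ (nevanlinnaWeight_le_nevanlinnaWeight_zero x y)) hfin
    (ae_of_all _ fun t => (continuous_nevanlinnaWeight x t).tendsto 0)

lemma integral_eq_toReal_lintegral_nevanlinnaWeight (σ : Measure ℝ) {y : ℝ} (hy : y ≠ 0) :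
    ∫ t, (1 + t ^ 2) / ((t - x) ^ 2 + y ^ 2) ∂σ = (∫⁻ t, nevanlinnaWeight x y t ∂σ).toReal := by
  rw [integral_eq_lintegral_of_nonneg_ae (ae_of_all _ fun t => by positivity)
    (by fun_prop : Measurable _).aestronglyMeasurable]
  congr 2 with t
  exact ENNReal.ofReal_div_of_pos (by positivity)

end Weight

lemma im_div_sub_ofReal (z : ℂ) (t : ℝ) :
    ((1 + t * z) / (z - t)).im = -(z.im * (1 + t ^ 2) / normSq (z - t)) := by
  simp only [div_im, add_im, mul_im, sub_re, sub_im, add_re, mul_re, one_re, one_im,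
    ofReal_re, ofReal_im]
  ring

lemma integrable_div_sub_ofReal (σ : Measure ℝ) [IsFiniteMeasure σ] {z : ℂ} (hz : 0 < z.im) :
    Integrable (fun t : ℝ => (1 + t * z) / (z - t)) σ := by
  have hne : ∀ t : ℝ, z - t ≠ 0 := fun t h => by
    simpa [hz.ne'] using congrArg im h
  have hbound : ∀ t : ℝ, ‖(1 + t * z) / (z - t)‖ ≤ ‖z‖ + ‖1 + z ^ 2‖ / z.im := fun t => by
    have hdist : z.im ≤ ‖z - t‖ := by simpa [abs_of_pos hz] using abs_im_le_norm (z - t)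
    calc ‖(1 + t * z) / (z - t)‖ = ‖-z + (1 + z ^ 2) / (z - t)‖ := by
          congr 1; field_simp [hne t]; ring
      _ ≤ ‖z‖ + ‖1 + z ^ 2‖ / ‖z - t‖ := (norm_add_le _ _).trans_eq (by rw [norm_neg, norm_div])
      _ ≤ ‖z‖ + ‖1 + z ^ 2‖ / z.im := by gcongr
  refine Integrable.of_bound ?_ _ (ae_of_all _ hbound)
  exact (Continuous.div (by fun_prop) (by fun_prop) hne).aestronglyMeasurable

lemma im_integral_div_sub_ofReal (σ : Measure ℝ) [IsFiniteMeasure σ] (x : ℝ) {y : ℝ} (hy : 0 < y) :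
    (∫ t : ℝ, (1 + t * (x + y * I)) / (x + y * I - t) ∂σ).im
      = -(y * (∫⁻ t, nevanlinnaWeight x y t ∂σ).toReal) := by
  have him : (x + y * I : ℂ).im = y := by simp
  have hnormSq (t : ℝ) : normSq (x + y * I - t) = (t - x) ^ 2 + y ^ 2 := by
    rw [normSq_apply, sub_re, sub_im, him, ofReal_re, ofReal_im, add_re, ofReal_re, mul_I_re,
      ofReal_im]
    ring
  rw [← integral_eq_toReal_lintegral_nevanlinnaWeight x σ hy.ne', ← integral_const_mul,
    ← integral_neg, ← RCLike.im_to_complex,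
    ← integral_im (integrable_div_sub_ofReal σ (by rwa [him]))]
  congr 1 with t
  rw [RCLike.im_to_complex, im_div_sub_ofReal, hnormSq, him]
  ring

theorem stmt18 (σ : Measure ℝ) [IsFiniteMeasure σ] (γ : ℝ) (x : ℝ)
    (H : ℂ → ℂ)
    (hH : ∀ z : ℂ, 0 < z.im →
      H z = z + (γ : ℂ) + ∫ t : ℝ, (1 + (t : ℂ) * z) / (z - (t : ℂ)) ∂σ)
    (hint : (∫⁻ t : ℝ, ENNReal.ofReal (1 + t ^ 2) / ENNReal.ofReal ((t - x) ^ 2) ∂σ) ≤ 1) :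
    (∀ y : ℝ, 0 < y → 0 ≤ (H ((x : ℂ) + (y : ℂ) * Complex.I)).im) ∧
    Tendsto (fun y : ℝ => (H ((x : ℂ) + (y : ℂ) * Complex.I)).im / y)
      (nhdsWithin 0 (Set.Ioi 0))
      (nhds (1 -
        (∫⁻ t : ℝ, ENNReal.ofReal (1 + t ^ 2) / ENNReal.ofReal ((t - x) ^ 2) ∂σ).toReal)) := by
  simp_rw [← nevanlinnaWeight_zero] at hint ⊢
  have him : ∀ y : ℝ, 0 < y →
      (H (x + y * I)).im = y * (1 - (∫⁻ t, nevanlinnaWeight x y t ∂σ).toReal) := fun y hy => by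
    rw [hH _ (by simpa), add_im, add_im, im_integral_div_sub_ofReal σ x hy]
    simp only [add_im, mul_im, ofReal_re, ofReal_im, I_re, I_im]
    ring
  have hle : ∀ y : ℝ, (∫⁻ t, nevanlinnaWeight x y t ∂σ).toReal ≤ 1 := fun y =>
    ENNReal.toReal_le_of_le_ofReal zero_le_one <| by
      simpa using (lintegral_mono (nevanlinnaWeight_le_nevanlinnaWeight_zero x y)).trans hint
  refine ⟨fun y hy => him y hy ▸ mul_nonneg hy.le (sub_nonneg.2 (hle y)), ?_⟩
  have hfin := ne_top_of_le_ne_top ENNReal.one_ne_top hint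
  have hlim := (ENNReal.tendsto_toReal hfin).comp (tendsto_lintegral_nevanlinnaWeight x σ hfin)
  refine (tendsto_const_nhds.sub (hlim.mono_left nhdsWithin_le_nhds)).congr' ?_
  filter_upwards [self_mem_nhdsWithin] with y (hy : 0 < y)
  simp only [Function.comp_apply, him y hy, mul_div_cancel_left₀ _ hy.ne']
end
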